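/- Let k ≥ 1 be an integer and let (a_i), (b_i), (h_i) for i = 1,…,k be sequences of positive reals satisfying (1) 0 ≤ h_1 ≤ h_2 ≤ … ≤ h_k ≤ 1, and (2) for every j ∈ [k], Σ_{i≤j} a_i·h_i ≥ (1/4)·Σ_{i≤j} (a_i + b_i). Then Σ_{i∈[k]} b_i·(1−h_i) ≤ (1/4)·Σ_{i∈[k]} (a_i + b_i). -/

import Mathlib

/-!
For `x > 1/4`, the inequality `b (1 - x) ≤ (a + b)/4 - λ (a x - (a + b)/4)` holds for all
`a, b ≥ 0` exactly when `3 - 4x ≤ λ ≤ 1/(4x - 1)` (compare the coefficients of `a` and `b`); the two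
bounds meet at `x = 1/2`. Taking `λ = leftoverWeight x` in this window, which is nonnegative and
antitone in `x`, and summing with `x = hᵢ`, the claim reduces to `0 ≤ ∑ λᵢ dᵢ` with
`dᵢ = aᵢ hᵢ - (aᵢ + bᵢ)/4`. The prefix sums of `d` are nonnegative by hypothesis and the `λᵢ`
are nonincreasing and nonnegative, so this follows by Abel summation.
-/

open Finset

theorem sum_mul_nonneg_of_antitone_of_prefix_sum_nonneg {R : Type*} [CommRing R] [PartialOrder R]
    [IsOrderedRing R] {k : ℕ} {w d : ℕ → R} (hw_last : 0 ≤ w (k - 1))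
    (hw_anti : ∀ i, i + 1 < k → w (i + 1) ≤ w i)
    (hd : ∀ j < k, 0 ≤ ∑ i ∈ range (j + 1), d i) :
    0 ≤ ∑ i ∈ range k, w i * d i := by
  rcases Nat.eq_zero_or_pos k with rfl | hk
  · simp
  have hd' : ∀ j, 0 < j → j ≤ k → 0 ≤ ∑ i ∈ range j, d i := fun j hj hjk => by
    simpa [Nat.sub_add_cancel hj] using hd (j - 1) (by omega)
  have hparts := sum_range_by_parts w d k
  simp only [smul_eq_mul] at hparts
  rw [hparts, sub_nonneg]
  calc ∑ i ∈ range (k - 1), (w (i + 1) - w i) * ∑ j ∈ range (i + 1), d j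
      ≤ 0 := sum_nonpos fun i hi => by
        rw [mem_range] at hi
        exact mul_nonpos_of_nonpos_of_nonneg (sub_nonpos.mpr (hw_anti i (by omega)))
          (hd' _ i.succ_pos (by omega))
    _ ≤ w (k - 1) * ∑ i ∈ range k, d i := mul_nonneg hw_last (hd' k hk le_rfl)

noncomputable def leftoverWeight (x : ℝ) : ℝ := if x ≤ 1 / 2 then 3 - 4 * x else (4 * x - 1)⁻¹

theorem leftoverWeight_nonneg (x : ℝ) : 0 ≤ leftoverWeight x := by
  unfold leftoverWeight
  split_ifs with hx
  · linarith
  · exact inv_nonneg.mpr (by linarith)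

theorem leftoverWeight_antitone : Antitone leftoverWeight := by
  intro x y hxy
  unfold leftoverWeight
  split_ifs with hy hx hx
  · linarith
  · linarith
  · have hy' : 1 ≤ 4 * y - 1 := by linarith
    linarith [inv_le_one_of_one_le₀ hy']
  · exact inv_anti₀ (by linarith) (by linarith)

theorem mul_one_sub_le_sub_leftoverWeight_mul {a b : ℝ} (ha : 0 ≤ a) (hb : 0 ≤ b) (x : ℝ) :
    b * (1 - x) ≤ (a + b) / 4 - leftoverWeight x * (a * x - (a + b) / 4) := by
  unfold leftoverWeight
  split_ifs with hx
  · nlinarith [mul_nonneg ha (sq_nonneg (2 * x - 1))]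
  · have hpos : 0 < 4 * x - 1 := by linarith
    have key : (a + b) / 4 - (4 * x - 1)⁻¹ * (a * x - (a + b) / 4) - b * (1 - x)
        = b * (2 * x - 1) ^ 2 / (4 * x - 1) := by
      field_simp
      ring
    linarith [show 0 ≤ b * (2 * x - 1) ^ 2 / (4 * x - 1) by positivity]

theorem stmt_2_general (k : ℕ) (a b h : ℕ → ℝ)
    (ha : ∀ i < k, 0 < a i) (hb : ∀ i < k, 0 < b i)
    (hmono : ∀ i, i + 1 < k → h i ≤ h (i + 1))
    (hyp : ∀ j < k, (1 / 4) * ∑ i ∈ Finset.range (j + 1), (a i + b i) ≤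
      ∑ i ∈ Finset.range (j + 1), a i * h i) :
    ∑ i ∈ Finset.range k, b i * (1 - h i) ≤
      (1 / 4) * ∑ i ∈ Finset.range k, (a i + b i) := by
  set d : ℕ → ℝ := fun i => a i * h i - (a i + b i) / 4
  have sum_d (n : ℕ) : ∑ i ∈ range n, d i
      = ∑ i ∈ range n, a i * h i - 1 / 4 * ∑ i ∈ range n, (a i + b i) := by
    rw [mul_sum, ← sum_sub_distrib]
    exact sum_congr rfl fun i _ => by ring
  have weighted_nonneg : 0 ≤ ∑ i ∈ range k, leftoverWeight (h i) * d i :=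
    sum_mul_nonneg_of_antitone_of_prefix_sum_nonneg (leftoverWeight_nonneg _)
      (fun i hi => leftoverWeight_antitone (hmono i hi))
      (fun j hj => by rw [sum_d]; linarith [hyp j hj])
  have pointwise : ∑ i ∈ range k, b i * (1 - h i)
      ≤ ∑ i ∈ range k, ((a i + b i) / 4 - leftoverWeight (h i) * d i) :=
    sum_le_sum fun i hi => mul_one_sub_le_sub_leftoverWeight_mul
      (ha i (mem_range.mp hi)).le (hb i (mem_range.mp hi)).le (h i)
  rw [sum_sub_distrib, ← sum_div] at pointwise
  linarith

theorem stmt_2 (k : ℕ) (hk : 1 ≤ k) (a b h : ℕ → ℝ)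
    (ha : ∀ i < k, 0 < a i) (hb : ∀ i < k, 0 < b i)
    (h0 : 0 ≤ h 0) (h1 : h (k - 1) ≤ 1)
    (hmono : ∀ i, i + 1 < k → h i ≤ h (i + 1))
    (hyp : ∀ j < k, (1 / 4) * ∑ i ∈ Finset.range (j + 1), (a i + b i) ≤
      ∑ i ∈ Finset.range (j + 1), a i * h i) :
    ∑ i ∈ Finset.range k, b i * (1 - h i) ≤
      (1 / 4) * ∑ i ∈ Finset.range k, (a i + b i) :=
  stmt_2_general k a b h ha hb hmono hyp
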